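/- F(X,Y) = 1 if and only if X = Y as partitions (they have the same set of parts); that is, the F-measure attains its maximal value exactly when the estimated partition coincides with the reference partition. -/

import Mathlib

/-!
Purity `Pur(X, Y)` is an average of the part purities weighted by `|x| / n`, and each part purity
is at most `1`, with equality exactly when the part lies inside a part of `Y`. Hence
`Pur(X, Y) = 1` iff `X` refines `Y`. A harmonic mean of two numbers in `[0, 1]` is `1` only when
both are `1`, so `F(X, Y) = 1` iff `X` and `Y` refine each other, i.e. `X = Y`.
-/

open Finset

/-- The purity of a part `x` with respect to the partition `Y`:
`Pur(x, Y) = max_j |x ∩ y_j| / |x|`. -/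
noncomputable def partPurity {α : Type*} [DecidableEq α] {s : Finset α}
    (x : Finset α) (Y : Finpartition s) : ℝ :=
  ((Y.parts.sup fun y => (x ∩ y).card : ℕ) : ℝ) / (x.card : ℝ)

/-- The total purity of the partition `X` with respect to the partition `Y`:
`Pur(X, Y) = Σ_i (|x_i| / n) · Pur(x_i, Y)`. -/
noncomputable def purity {α : Type*} [DecidableEq α] {s : Finset α}
    (X Y : Finpartition s) : ℝ :=
  ∑ x ∈ X.parts, ((x.card : ℝ) / (s.card : ℝ)) * partPurity x Y

/-- The F-measure: harmonic mean of the purity and the inverse purity. -/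
noncomputable def fMeasure {α : Type*} [DecidableEq α] {s : Finset α}
    (X Y : Finpartition s) : ℝ :=
  2 * purity X Y * purity Y X / (purity X Y + purity Y X)

theorem two_mul_mul_div_add_eq_one_iff {K : Type*} [Field K] [LinearOrder K]
    [IsStrictOrderedRing K] {a b : K} (ha₀ : 0 ≤ a) (ha₁ : a ≤ 1) (hb₀ : 0 ≤ b) (hb₁ : b ≤ 1) :
    2 * a * b / (a + b) = 1 ↔ a = 1 ∧ b = 1 := by
  refine ⟨fun h => ?_, fun ⟨ha, hb⟩ => by subst ha hb; norm_num⟩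
  have hab : a + b ≠ 0 := fun hab => by simp [hab] at h
  rw [div_eq_one_iff_eq hab] at h
  have hsum : a * (1 - b) + b * (1 - a) = 0 := by linear_combination -h
  obtain ⟨h₁, h₂⟩ := (add_eq_zero_iff_of_nonneg (mul_nonneg ha₀ (sub_nonneg.2 hb₁))
    (mul_nonneg hb₀ (sub_nonneg.2 ha₁))).1 hsum
  have ha : a ≠ 0 := fun ha => hab (by simp_all)
  have hb : b = 1 := by linarith [(mul_eq_zero.1 h₁).resolve_left ha]
  subst hb
  exact ⟨by linarith [(mul_eq_zero.1 h₂).resolve_left one_ne_zero], rfl⟩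

section

variable {α : Type*} [DecidableEq α] {s : Finset α}

theorem partPurity_nonneg (x : Finset α) (Y : Finpartition s) : 0 ≤ partPurity x Y := by
  unfold partPurity
  positivity

theorem partPurity_le_one (x : Finset α) (Y : Finpartition s) : partPurity x Y ≤ 1 :=
  div_le_one_of_le₀ (mod_cast Finset.sup_le fun _ _ => card_le_card inter_subset_left)
    (Nat.cast_nonneg _)

theorem partPurity_eq_one_iff {x : Finset α} (hx : x.Nonempty) (Y : Finpartition s) :
    partPurity x Y = 1 ↔ ∃ y ∈ Y.parts, x ⊆ y := by
  have hsup : (Y.parts.sup fun y => #(x ∩ y)) ≤ #x :=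
    Finset.sup_le fun _ _ => card_le_card inter_subset_left
  rw [partPurity, div_eq_one_iff_eq (by positivity), Nat.cast_inj, le_antisymm_iff,
    and_iff_right hsup, Finset.le_sup_iff (by simpa using hx)]
  refine exists_congr fun y => and_congr_right fun _ => ?_
  rw [← inter_eq_left]
  exact ⟨fun h => eq_of_subset_of_card_le inter_subset_left h, fun h => h.symm ▸ le_rfl⟩

theorem sum_card_div_card_parts (hs : s.Nonempty) (X : Finpartition s) :
    ∑ x ∈ X.parts, (#x : ℝ) / #s = 1 := by
  rw [← sum_div, div_eq_one_iff_eq (by positivity)]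
  exact_mod_cast X.sum_card_parts

theorem purity_nonneg (X Y : Finpartition s) : 0 ≤ purity X Y :=
  sum_nonneg fun x _ => mul_nonneg (by positivity) (partPurity_nonneg x Y)

theorem purity_le_one (X Y : Finpartition s) : purity X Y ≤ 1 :=
  calc purity X Y ≤ ∑ x ∈ X.parts, (#x : ℝ) / #s :=
        sum_le_sum fun x _ => mul_le_of_le_one_right (by positivity) (partPurity_le_one x Y)
    _ = (#s : ℝ) / #s := by rw [← sum_div, ← Nat.cast_sum, X.sum_card_parts]
    _ ≤ 1 := div_self_le_one _

theorem purity_eq_one_iff_le (hs : s.Nonempty) (X Y : Finpartition s) :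
    purity X Y = 1 ↔ X ≤ Y := by
  have hle : ∀ x ∈ X.parts, (#x : ℝ) / #s * partPurity x Y ≤ (#x : ℝ) / #s :=
    fun x _ => mul_le_of_le_one_right (by positivity) (partPurity_le_one x Y)
  rw [purity, ← sum_card_div_card_parts hs X, sum_eq_sum_iff_of_le hle]
  refine forall₂_congr fun x hx => ?_
  have hxs : (0 : ℝ) < #x / #s := by
    have := (X.nonempty_of_mem_parts hx).card_pos
    have := hs.card_pos
    positivity
  rw [mul_eq_left₀ hxs.ne', partPurity_eq_one_iff (X.nonempty_of_mem_parts hx)]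

end

/-- `F(X,Y) = 1` if and only if `X = Y` as partitions (they have the
same set of parts). -/
theorem fMeasure_eq_one_iff_eq {α : Type*} [DecidableEq α] {s : Finset α}
    (hs : s.Nonempty) (X Y : Finpartition s) :
    fMeasure X Y = 1 ↔ X = Y := by
  rw [fMeasure, two_mul_mul_div_add_eq_one_iff (purity_nonneg X Y) (purity_le_one X Y)
    (purity_nonneg Y X) (purity_le_one Y X), purity_eq_one_iff_le hs,
    purity_eq_one_iff_le hs, le_antisymm_iff]
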